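/- For a triangle with vertices P_1, P_2, P_3 and a point M strictly outside the triangle and not on any of the six rays obtained by extending the edges, the sum of the cross functions ρ_{P_1}(M) + ρ_{P_2}(M) + ρ_{P_3}(M) equals 0, while for M strictly inside the triangle the sum equals 1. -/

import Mathlib

/-!
Write `M = α P₁ + β P₂ + γ P₃` in barycentric coordinates. `M` lies in an inner wedge at `P₁`
exactly when `β γ > 0` (and symmetrically at `P₂`, `P₃`), so with `k` the number of positive
products among `β γ, α γ, α β` and `θ₁ + θ₂ + θ₃ = π`, the sum of the cross functions is
`k / 2 - 1 / 2`. Off the edge lines the coordinates are nonzero with sum `1`: inside the triangle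
all three are positive and `k = 3`; outside, exactly two of them share a sign and `k = 1`.
-/

open Real EuclideanGeometry

/-- M lies in one of the two open wedges of angle ∠XVY formed by the two lines
through V and X, resp. V and Y (the "inner" wedges at the vertex V). -/
def InInnerWedge (V X Y M : EuclideanSpace ℝ (Fin 2)) : Prop :=
  ∃ l m : ℝ, 0 < l ∧ 0 < m ∧
    (M - V = l • (X - V) + m • (Y - V) ∨ M - V = -(l • (X - V) + m • (Y - V)))

open Classical in
/-- The cross function of M at a convex vertex V with adjacent vertices X, Y:
1/2 - θ/(2π) if M is in an inner wedge, -θ/(2π) otherwise, where θ = ∠XVY. -/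
noncomputable def rho (V X Y M : EuclideanSpace ℝ (Fin 2)) : ℝ :=
  if InInnerWedge V X Y M then 1 / 2 - EuclideanGeometry.angle X V Y / (2 * π)
  else -(EuclideanGeometry.angle X V Y / (2 * π))

section Barycentric

variable {k E : Type*} [Ring k] [AddCommGroup E] [Module k E]

theorem AffineIndependent.eq_of_barycentric_eq {P₁ P₂ P₃ : E} {a b c a' b' c' : k}
    (h : AffineIndependent k ![P₁, P₂, P₃]) (hsum : a + b + c = a' + b' + c')
    (hP : a • P₁ + b • P₂ + c • P₃ = a' • P₁ + b' • P₂ + c' • P₃) :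
    a = a' ∧ b = b' ∧ c = c' := by
  have := h.eq_of_sum_eq_sum (s := Finset.univ) (w₁ := ![a, b, c]) (w₂ := ![a', b', c'])
    (by simpa [Fin.sum_univ_three] using hsum) (by simpa [Fin.sum_univ_three] using hP)
  exact ⟨this 0 (by simp), this 1 (by simp), this 2 (by simp)⟩

theorem smul_add_smul_mem_affineSpan_pair {P Q : E} {a b : k} (hab : a + b = 1) :
    a • P + b • Q ∈ line[k, P, Q] :=
  mem_affineSpan_pair_iff_exists_lineMap_eq.mpr
    ⟨b, by rw [AffineMap.lineMap_apply_module, ← hab, add_sub_cancel_right]⟩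

theorem barycentric_ne_zero_of_notMem_affineSpan_pair {P₁ P₂ P₃ M : E} {a b c : k}
    (habc : a + b + c = 1) (hM : M = a • P₁ + b • P₂ + c • P₃)
    (h₁₂ : M ∉ line[k, P₁, P₂]) (h₂₃ : M ∉ line[k, P₂, P₃]) (h₁₃ : M ∉ line[k, P₁, P₃]) :
    a ≠ 0 ∧ b ≠ 0 ∧ c ≠ 0 := by
  subst hM
  refine ⟨?_, ?_, ?_⟩ <;> rintro rfl
  · exact h₂₃ (by simpa using smul_add_smul_mem_affineSpan_pair (by simpa using habc))
  · exact h₁₃ (by simpa using smul_add_smul_mem_affineSpan_pair (by simpa using habc))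
  · exact h₁₂ (by simpa using smul_add_smul_mem_affineSpan_pair (by simpa using habc))

end Barycentric

section SignCount

variable {R : Type*} [Field R] [LinearOrder R] [IsStrictOrderedRing R] {a b c : R}

theorem sum_ite_pos_mul_of_pos (ha : 0 < a) (hb : 0 < b) (hc : 0 < c) :
    ((if 0 < b * c then 1 else 0) + (if 0 < a * c then 1 else 0) +
      (if 0 < a * b then 1 else 0) : R) = 3 := by
  norm_num [ha, hb, hc]

theorem sum_ite_pos_mul_of_not_pos (ha : a ≠ 0) (hb : b ≠ 0) (hc : c ≠ 0)
    (hsum : 0 < a + b + c) (hnot : ¬(0 < a ∧ 0 < b ∧ 0 < c)) :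
    ((if 0 < b * c then 1 else 0) + (if 0 < a * c then 1 else 0) +
      (if 0 < a * b then 1 else 0) : R) = 1 := by
  rcases ha.lt_or_gt with ha | ha <;> rcases hb.lt_or_gt with hb | hb <;>
    rcases hc.lt_or_gt with hc | hc <;>
    simp [mul_pos_iff, ha, hb, hc, ha.not_gt, hb.not_gt, hc.not_gt] at hnot ⊢
  linarith

end SignCount

local notation "𝔼²" => EuclideanSpace ℝ (Fin 2)

theorem inInnerWedge_iff_mul_pos {V X Y M : 𝔼²} {a b c : ℝ}
    (h : AffineIndependent ℝ ![V, X, Y]) (habc : a + b + c = 1)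
    (hM : M = a • V + b • X + c • Y) : InInnerWedge V X Y M ↔ 0 < b * c := by
  constructor
  · rintro ⟨l, m, hl, hm, hlm | hlm⟩
    · obtain ⟨-, rfl, rfl⟩ := h.eq_of_barycentric_eq (a' := 1 - l - m) (b' := l) (c' := m)
        (habc.trans (by ring)) (by rw [← hM]; linear_combination (norm := module) hlm)
      positivity
    · obtain ⟨-, rfl, rfl⟩ := h.eq_of_barycentric_eq (a' := 1 + l + m) (b' := -l) (c' := -m)
        (habc.trans (by ring)) (by rw [← hM]; linear_combination (norm := module) hlm)
      simpa using mul_pos hl hm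
  · intro hbc
    rcases pos_and_pos_or_neg_and_neg_of_mul_pos hbc with ⟨hb, hc⟩ | ⟨hb, hc⟩
    · exact ⟨b, c, hb, hc, Or.inl (by rw [hM, show a = 1 - b - c by linarith]; module)⟩
    · exact ⟨-b, -c, by linarith, by linarith,
        Or.inr (by rw [hM, show a = 1 - b - c by linarith]; module)⟩

open Classical in
theorem rho_eq_ite_sub (V X Y M : 𝔼²) :
    rho V X Y M = (if InInnerWedge V X Y M then 1 / 2 else 0) - ∠ X V Y / (2 * π) := by
  unfold rho; split_ifs <;> ring

theorem rho_add_rho_add_rho {P₁ P₂ P₃ M : 𝔼²} {a b c : ℝ}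
    (h : AffineIndependent ℝ ![P₁, P₂, P₃]) (habc : a + b + c = 1)
    (hM : M = a • P₁ + b • P₂ + c • P₃) :
    rho P₁ P₂ P₃ M + rho P₂ P₁ P₃ M + rho P₃ P₁ P₂ M =
      ((if 0 < b * c then 1 else 0) + (if 0 < a * c then 1 else 0) +
        (if 0 < a * b then 1 else 0)) / 2 - 1 / 2 := by
  have h₁ := inInnerWedge_iff_mul_pos h habc hM
  have h₂ := inInnerWedge_iff_mul_pos h.comm_left (M := M) (a := b) (b := a) (c := c)
    (by linarith) (by rw [hM]; abel)
  have h₃ := inInnerWedge_iff_mul_pos h.comm_right.comm_left (M := M) (a := c) (b := a) (c := b)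
    (by linarith) (by rw [hM]; abel)
  have hangles : ∠ P₂ P₁ P₃ + ∠ P₁ P₂ P₃ + ∠ P₁ P₃ P₂ = π := by
    have hne : P₂ ≠ P₁ := by simpa using h.injective.ne (show (1 : Fin 3) ≠ 0 by decide)
    linarith [angle_add_angle_add_angle_eq_pi P₃ hne, angle_comm P₂ P₁ P₃, angle_comm P₁ P₃ P₂]
  have hhalf : ∠ P₂ P₁ P₃ / (2 * π) + ∠ P₁ P₂ P₃ / (2 * π) + ∠ P₁ P₃ P₂ / (2 * π) = 1 / 2 := by
    rw [← add_div, ← add_div, hangles]; field_simp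
  rw [rho_eq_ite_sub, rho_eq_ite_sub, rho_eq_ite_sub]
  simp only [h₁, h₂, h₃]
  split_ifs <;> linarith

/-- For a triangle P₁P₂P₃ and a point M not on any of the lines through the
edges: if M is strictly outside the triangle the sum of the three cross
functions is 0, and if M is strictly inside it the sum is 1. -/
theorem sum_rho_triangle (P1 P2 P3 M : EuclideanSpace ℝ (Fin 2))
    (hind : AffineIndependent ℝ ![P1, P2, P3])
    (hl12 : M ∉ line[ℝ, P1, P2]) (hl23 : M ∉ line[ℝ, P2, P3])
    (hl13 : M ∉ line[ℝ, P1, P3]) :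
    (M ∉ convexHull ℝ {P1, P2, P3} →
      rho P1 P2 P3 M + rho P2 P1 P3 M + rho P3 P1 P2 M = 0) ∧
    (M ∈ interior (convexHull ℝ {P1, P2, P3}) →
      rho P1 P2 P3 M + rho P2 P1 P3 M + rho P3 P1 P2 M = 1) := by
  let B : AffineBasis (Fin 3) ℝ 𝔼² :=
    ⟨![P1, P2, P3], hind, hind.affineSpan_eq_top_iff_card_eq_finrank_add_one.mpr (by simp)⟩
  have hrange : Set.range B = {P1, P2, P3} := by
    rw [← Set.singleton_union, ← Matrix.range_cons_cons_empty P2 P3 ![]]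
    exact Matrix.range_cons P1 ![P2, P3]
  have habc : B.coord 0 M + B.coord 1 M + B.coord 2 M = 1 :=
    (Fin.sum_univ_three _).symm.trans (B.sum_coord_apply_eq_one M)
  have hM : M = B.coord 0 M • P1 + B.coord 1 M • P2 + B.coord 2 M • P3 :=
    (B.linear_combination_coord_eq_self M).symm.trans (Fin.sum_univ_three _)
  obtain ⟨ha, hb, hc⟩ := barycentric_ne_zero_of_notMem_affineSpan_pair habc hM hl12 hl23 hl13
  rw [rho_add_rho_add_rho hind habc hM, ← hrange, B.interior_convexHull,
    B.convexHull_eq_nonneg_coord]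
  refine ⟨fun hout ↦ ?_, fun hin ↦ ?_⟩
  · rw [sum_ite_pos_mul_of_not_pos ha hb hc (by linarith) fun ⟨h0, h1, h2⟩ ↦ hout ?_]
    · norm_num
    · simp [Fin.forall_fin_succ, h0.le, h1.le, h2.le]
  · rw [sum_ite_pos_mul_of_pos (hin 0) (hin 1) (hin 2)]
    norm_num
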